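/- Let m be a positive integer not divisible by p and suppose d equals the multiplicative order of q modulo m. Then the number of monic irreducible polynomials over the finite field F_q (q = p^n, p prime) of degree d and order m equals φ(m)/d, where φ is Euler's totient function. -/

import Mathlib

/-- Entry (i,j) of the companion matrix of a monic polynomial
`f = a_0 + a_1 t + ... + a_{d-1} t^{d-1} + t^d`. -/
def companionEntry {F : Type} [Field F] (d : ℕ) (f : Polynomial F) (i j : ℕ) : F :=
  if i = d - 1 then -f.coeff j else if j = i + 1 then 1 else 0

/-- The companion matrix of a monic polynomial of degree d: 1's on the
superdiagonal, last row `(-a_0, ..., -a_{d-1})`, 0's elsewhere. -/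
def companionMatrix {F : Type} [Field F] (d : ℕ) (f : Polynomial F) :
    Matrix (Fin d) (Fin d) F :=
  Matrix.of fun i j => companionEntry d f (i : ℕ) (j : ℕ)

/-!
Write `q = |F|`. For monic `f`, the companion matrix is the transposed matrix of multiplication
by the root of `f` in `F[X] ⧸ (f)`, so for irreducible `f` its order is the multiplicative order
of any root of `f` in any extension field. The polynomials counted are therefore the minimal
polynomials of the primitive `m`-th roots of unity, which exist in the cyclotomic extension since
`m ∣ q ^ d - 1` makes `m` invertible in `F`. For such a root `x`, `x ^ q ^ k = x` holds iff
`m ∣ q ^ k - 1`, and, as the Frobenius `y ↦ y ^ q` has order `[F(x) : F]` on `F(x)`, iff the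
degree of the minimal polynomial of `x` divides `k`; so that degree is `d`. Being separable of
degree `d` and split over the cyclotomic extension, each minimal polynomial accounts for exactly
`d` of the `φ(m)` primitive `m`-th roots of unity.
-/

open Polynomial Matrix Finset

theorem modByMonic_X_pow_natDegree {R : Type*} [CommRing R] [Nontrivial R] {f : R[X]}
    (hf : f.Monic) : X ^ f.natDegree %ₘ f = X ^ f.natDegree - f := by
  rw [modByMonic_eq_of_dvd_sub hf (p₂ := X ^ f.natDegree - f) (by simp),
    (modByMonic_eq_self_iff hf).mpr]
  exact degree_sub_lt_right (by rw [degree_X_pow, degree_eq_natDegree hf.ne_zero]) hf.ne_zero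
    (by rw [hf.leadingCoeff, leadingCoeff_X_pow])

section Companion

variable {F : Type} {K : Type*} [Field F] [Field K] [Algebra F K]

theorem companionMatrix_eq_transpose_leftMulMatrix {f : F[X]} (hf : f.Monic) :
    companionMatrix f.natDegree f =
      (Algebra.leftMulMatrix (AdjoinRoot.powerBasisAux' hf) (AdjoinRoot.root f))ᵀ := by
  ext i j
  have hgen : AdjoinRoot.powerBasisAux' hf i = AdjoinRoot.root f ^ (i : ℕ) :=
    (AdjoinRoot.powerBasis' hf).basis_eq_pow i
  rw [transpose_apply, Algebra.leftMulMatrix_eq_repr_mul, hgen, ← pow_succ',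
    ← AdjoinRoot.mk_X, ← map_pow, AdjoinRoot.powerBasisAux'_repr_apply_to_fun,
    AdjoinRoot.modByMonicHom_mk]
  simp only [companionMatrix, of_apply, companionEntry]
  by_cases hi : (i : ℕ) = f.natDegree - 1
  · rw [if_pos hi, show (i : ℕ) + 1 = f.natDegree by omega, modByMonic_X_pow_natDegree hf,
      coeff_sub, coeff_X_pow, if_neg (by omega), zero_sub]
  · rw [if_neg hi, (modByMonic_eq_self_iff hf).mpr, coeff_X_pow]
    rw [degree_X_pow, degree_eq_natDegree hf.ne_zero]
    exact_mod_cast (by omega)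

theorem Matrix.orderOf_transpose {n R : Type*} [Fintype n] [DecidableEq n] [CommSemiring R]
    (A : Matrix n n R) : orderOf Aᵀ = orderOf A :=
  orderOf_eq_orderOf_iff.mpr fun k => by rw [← transpose_pow, transpose_eq_one]

theorem orderOf_companionMatrix_natDegree {f : F[X]} (hf : f.Monic) :
    orderOf (companionMatrix f.natDegree f) = orderOf (AdjoinRoot.root f) := by
  rw [companionMatrix_eq_transpose_leftMulMatrix hf, orderOf_transpose]
  exact orderOf_injective (Algebra.leftMulMatrix _).toMonoidHom
    (Algebra.leftMulMatrix_injective _) _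

theorem orderOf_companionMatrix_of_aeval_eq_zero {f : F[X]} (hf : f.Monic) (hirr : Irreducible f)
    {x : K} (hx : aeval x f = 0) :
    orderOf (companionMatrix f.natDegree f) = orderOf x := by
  have : Fact (Irreducible f) := ⟨hirr⟩
  rw [orderOf_companionMatrix_natDegree hf,
    ← AdjoinRoot.liftAlgHom_root f (Algebra.ofId F K) x hx]
  exact (orderOf_injective _ (RingHom.injective _) _).symm

theorem orderOf_eq_of_aeval_minpoly_eq_zero {x y : K} (hx : IsIntegral F x)
    (hy : aeval y (minpoly F x) = 0) : orderOf y = orderOf x := by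
  rw [← orderOf_companionMatrix_of_aeval_eq_zero (minpoly.monic hx) (minpoly.irreducible hx) hy,
    orderOf_companionMatrix_of_aeval_eq_zero (minpoly.monic hx) (minpoly.irreducible hx)
      (minpoly.aeval F x)]

end Companion

section Degree

variable {F K : Type*} [Field F] [Fintype F] [Field K] [Algebra F K]

open IntermediateField in
theorem pow_card_pow_eq_self_iff_natDegree_minpoly_dvd {x : K} (hx : IsIntegral F x) (k : ℕ) :
    x ^ Fintype.card F ^ k = x ↔ (minpoly F x).natDegree ∣ k := by
  let pb := adjoin.powerBasis hx
  have : FiniteDimensional F F⟮x⟯ := pb.finite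
  have : Finite F⟮x⟯ := Module.finite_of_finite F
  rw [← adjoin.powerBasis_dim hx, ← pb.finrank, ← FiniteField.orderOf_frobeniusAlgHom,
    orderOf_dvd_iff_pow_eq_one]
  constructor
  · intro h
    refine pb.algHom_ext ?_
    apply Subtype.ext
    simp [pb, AlgHom.coe_pow, FiniteField.coe_frobeniusAlgHom, pow_iterate, h]
  · intro h
    have := congrArg (fun φ : F⟮x⟯ →ₐ[F] F⟮x⟯ => (φ (AdjoinSimple.gen F x) : K)) h
    simpa [AlgHom.coe_pow, FiniteField.coe_frobeniusAlgHom, pow_iterate] using this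

theorem pow_succ_eq_self_iff_orderOf_dvd {G₀ : Type*} [GroupWithZero G₀] {x : G₀}
    (hx : x ≠ 0) (k : ℕ) : x ^ (k + 1) = x ↔ orderOf x ∣ k := by
  rw [pow_succ, mul_eq_right₀ hx, orderOf_dvd_iff_pow_eq_one]

theorem natDegree_minpoly_eq_of_isLeast {x : K} (hx : IsIntegral F x) (hx0 : x ≠ 0) {d : ℕ}
    (hd : IsLeast {e | 0 < e ∧ orderOf x ∣ Fintype.card F ^ e - 1} d) :
    (minpoly F x).natDegree = d := by
  have hset : {e | 0 < e ∧ orderOf x ∣ Fintype.card F ^ e - 1} =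
      {e | 0 < e ∧ (minpoly F x).natDegree ∣ e} := by
    ext e
    simp only [Set.mem_ofPred_eq, ← pow_card_pow_eq_self_iff_natDegree_minpoly_dvd hx,
      ← pow_succ_eq_self_iff_orderOf_dvd hx0,
      Nat.sub_add_cancel (Nat.one_le_pow _ _ Fintype.card_pos)]
  rw [hset] at hd
  exact (hd.unique ⟨⟨minpoly.natDegree_pos hx, dvd_rfl⟩,
    fun e he => Nat.le_of_dvd he.1 he.2⟩).symm

end Degree

section Count

variable {F : Type} {K : Type*} [Field F] [Field K] [Algebra F K] {m : ℕ} {ζ : K}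

theorem IsPrimitiveRoot.splits_of_dvd_X_pow_sub_one (hζ : IsPrimitiveRoot ζ m) (hm : 0 < m)
    {f : F[X]} (hf : f ∣ X ^ m - 1) : Splits (f.map (algebraMap F K)) := by
  have hsplit : Splits ((X ^ m - 1 : F[X]).map (algebraMap F K)) := by
    simpa using X_pow_sub_one_splits hζ
  exact hsplit.of_dvd (Polynomial.map_ne_zero (X_pow_sub_C_ne_zero hm 1)) (Polynomial.map_dvd _ hf)

theorem minpoly_dvd_X_pow_sub_one {x : K} (hx : x ^ m = 1) : minpoly F x ∣ X ^ m - 1 :=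
  minpoly.dvd F x (by simp [hx])

theorem isIntegral_of_pow_eq_one {x : K} (hm : 0 < m) (hx : x ^ m = 1) : IsIntegral F x :=
  IsIntegral.of_pow hm (hx ▸ isIntegral_one)

open scoped Classical in
theorem mem_image_minpoly_primitiveRoots_iff (hζ : IsPrimitiveRoot ζ m) (hm : 0 < m) {f : F[X]} :
    f ∈ (primitiveRoots m K).image (minpoly F) ↔
      f.Monic ∧ Irreducible f ∧ orderOf (companionMatrix f.natDegree f) = m := by
  constructor
  · intro hf
    obtain ⟨x, hx, rfl⟩ := Finset.mem_image.mp hf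
    have hxm := (mem_primitiveRoots hm).mp hx
    have hint := isIntegral_of_pow_eq_one (F := F) hm hxm.pow_eq_one
    refine ⟨minpoly.monic hint, minpoly.irreducible hint, ?_⟩
    rw [orderOf_companionMatrix_of_aeval_eq_zero (minpoly.monic hint) (minpoly.irreducible hint)
      (minpoly.aeval F x), hxm.eq_orderOf]
  · rintro ⟨hmo, hirr, hord⟩
    have : Fact (Irreducible f) := ⟨hirr⟩
    have hroot : aeval (AdjoinRoot.root f) f = 0 := AdjoinRoot.aeval_eq f ▸ AdjoinRoot.mk_self
    have hdvd : f ∣ X ^ m - 1 := by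
      rw [minpoly.eq_of_irreducible_of_monic hirr hroot hmo]
      refine minpoly_dvd_X_pow_sub_one (orderOf_dvd_iff_pow_eq_one.mp ?_)
      rw [← orderOf_companionMatrix_of_aeval_eq_zero hmo hirr hroot, hord]
    obtain ⟨x, hx⟩ := (hζ.splits_of_dvd_X_pow_sub_one hm hdvd).exists_eval_eq_zero
      (by rw [degree_map]; exact (degree_pos_of_irreducible hirr).ne')
    have hxf : aeval x f = 0 := by rwa [aeval_def, eval₂_eq_eval_map]
    refine Finset.mem_image.mpr ⟨x, (mem_primitiveRoots hm).mpr ?_,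
      (minpoly.eq_of_irreducible_of_monic hirr hxf hmo).symm⟩
    rw [IsPrimitiveRoot.iff_orderOf, ← orderOf_companionMatrix_of_aeval_eq_zero hmo hirr hxf,
      hord]

open scoped Classical in
theorem setOf_orderOf_companionMatrix_eq_image_minpoly (hζ : IsPrimitiveRoot ζ m) (hm : 0 < m)
    {d : ℕ} (hd : ∀ x ∈ primitiveRoots m K, (minpoly F x).natDegree = d) :
    {f : F[X] | f.Monic ∧ Irreducible f ∧ f.natDegree = d ∧
      orderOf (companionMatrix d f) = m} = ↑((primitiveRoots m K).image (minpoly F)) := by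
  ext f
  rw [Set.mem_ofPred_eq, Finset.mem_coe]
  constructor
  · rintro ⟨hmo, hirr, rfl, hord⟩
    exact (mem_image_minpoly_primitiveRoots_iff hζ hm).mpr ⟨hmo, hirr, hord⟩
  · intro hf
    obtain ⟨x, hx, rfl⟩ := Finset.mem_image.mp hf
    obtain ⟨hmo, hirr, hord⟩ := (mem_image_minpoly_primitiveRoots_iff hζ hm).mp hf
    rw [hd x hx] at hord
    exact ⟨hmo, hirr, hd x hx, hord⟩

open scoped Classical in
theorem card_filter_minpoly_eq [PerfectField F] (hζ : IsPrimitiveRoot ζ m) (hm : 0 < m) {x : K}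
    (hx : x ∈ primitiveRoots m K) :
    #{y ∈ primitiveRoots m K | minpoly F y = minpoly F x} = (minpoly F x).natDegree := by
  have hxm := (mem_primitiveRoots hm).mp hx
  have hint := isIntegral_of_pow_eq_one (F := F) hm hxm.pow_eq_one
  have hfiber : {y ∈ primitiveRoots m K | minpoly F y = minpoly F x} =
      ((minpoly F x).rootSet K).toFinset := by
    ext y
    rw [Finset.mem_filter, Set.mem_toFinset, mem_rootSet, mem_primitiveRoots hm]
    constructor
    · rintro ⟨-, hy⟩
      exact ⟨minpoly.ne_zero hint, hy ▸ minpoly.aeval F y⟩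
    · rintro ⟨-, hy⟩
      refine ⟨?_, (minpoly.eq_of_irreducible_of_monic (minpoly.irreducible hint) hy
        (minpoly.monic hint)).symm⟩
      rw [IsPrimitiveRoot.iff_orderOf, orderOf_eq_of_aeval_minpoly_eq_zero hint hy,
        ← hxm.eq_orderOf]
  rw [hfiber, Set.toFinset_card, card_rootSet_eq_natDegree
    (PerfectField.separable_of_irreducible (minpoly.irreducible hint))
    (hζ.splits_of_dvd_X_pow_sub_one hm (minpoly_dvd_X_pow_sub_one hxm.pow_eq_one))]

open scoped Classical in
theorem card_image_minpoly_primitiveRoots_mul [PerfectField F] (hζ : IsPrimitiveRoot ζ m)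
    (hm : 0 < m) {d : ℕ} (hd : ∀ x ∈ primitiveRoots m K, (minpoly F x).natDegree = d) :
    #((primitiveRoots m K).image (minpoly F)) * d = m.totient := by
  rw [← hζ.card_primitiveRoots, card_eq_sum_card_image (minpoly F) (primitiveRoots m K)]
  refine (Finset.sum_const_nat fun f hf => ?_).symm
  obtain ⟨x, hx, rfl⟩ := Finset.mem_image.mp hf
  rw [card_filter_minpoly_eq hζ hm hx, hd x hx]

end Count

theorem FiniteField.natCast_ne_zero_of_dvd_card_pow_sub_one {F : Type*} [Field F] [Fintype F]
    {m e : ℕ} (he : 0 < e) (h : m ∣ Fintype.card F ^ e - 1) : (m : F) ≠ 0 := by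
  intro hm
  have hzero : ((Fintype.card F ^ e - 1 : ℕ) : F) = 0 :=
    zero_dvd_iff.mp (hm ▸ Nat.cast_dvd_cast h)
  rw [Nat.cast_sub (Nat.one_le_pow _ _ Fintype.card_pos), Nat.cast_pow, Nat.cast_card_eq_zero,
    zero_pow he.ne', zero_sub, neg_eq_zero, Nat.cast_one] at hzero
  exact one_ne_zero hzero

theorem card_irreducible_of_degree_and_order_general
    (p n m d : ℕ)
    (F : Type) [Field F] [Fintype F] (hF : Fintype.card F = p ^ n)
    (hd : IsLeast {e : ℕ | 0 < e ∧ m ∣ (p ^ n) ^ e - 1} d) :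
    {f : Polynomial F | f.Monic ∧ Irreducible f ∧ f.natDegree = d ∧
        orderOf (companionMatrix d f) = m}.ncard = Nat.totient m / d := by
  classical
  rw [← hF] at hd
  have : NeZero (m : F) := ⟨FiniteField.natCast_ne_zero_of_dvd_card_pow_sub_one hd.1.1 hd.1.2⟩
  have : NeZero m := NeZero.of_neZero_natCast F
  have hm : 0 < m := Nat.pos_of_neZero m
  let K := CyclotomicField m F
  have hζ := IsCyclotomicExtension.zeta_spec m F K
  have hdeg : ∀ x ∈ primitiveRoots m K, (minpoly F x).natDegree = d := fun x hx => by
    have hxm := (mem_primitiveRoots hm).mp hx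
    rw [hxm.eq_orderOf] at hd
    exact natDegree_minpoly_eq_of_isLeast (isIntegral_of_pow_eq_one hm hxm.pow_eq_one)
      (hxm.ne_zero (NeZero.ne m)) hd
  rw [setOf_orderOf_companionMatrix_eq_image_minpoly hζ hm hdeg, Set.ncard_coe_finset,
    ← card_image_minpoly_primitiveRoots_mul hζ hm hdeg, Nat.mul_div_cancel _ hd.1.1]

/-- Let m be a positive integer not divisible by p and suppose d is
the multiplicative order of q modulo m (the least positive e with m ∣ q^e - 1).
Then the number of monic irreducible polynomials over F_q (q = p^n, p prime) of
degree d and order m equals φ(m)/d. -/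
theorem card_irreducible_of_degree_and_order
    (p n m d : ℕ) (hp : p.Prime) (hn : 0 < n)
    (hm : 0 < m) (hpm : ¬ p ∣ m)
    (F : Type) [Field F] [Fintype F] (hF : Fintype.card F = p ^ n)
    (hd : IsLeast {e : ℕ | 0 < e ∧ m ∣ (p ^ n) ^ e - 1} d) :
    {f : Polynomial F | f.Monic ∧ Irreducible f ∧ f.natDegree = d ∧
        orderOf (companionMatrix d f) = m}.ncard = Nat.totient m / d :=
  card_irreducible_of_degree_and_order_general p n m d F hF hd
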